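/- Let X be a finite connected graph and let Q be the simple random walk kernel with stationary measure π(x) = d_x / Σ_v d_v. Assume the Bakry–Émery pointwise gradient estimate with constant κ > 0 holds: for all f : X → ℝ, all x ∈ X and all t ≥ 0, Γ(P_t f)(x) ≤ e^{−2κt} · P_t Γ(f)(x). Then the combinatorial diameter satisfies diam(X) ≤ 2/κ. -/

import Mathlib

/-- The logarithmic mean: `θ(a,b) = (a-b)/(log a - log b)` for distinct positive `a,b`,
`θ(a,a) = a`, and `θ(a,b) = 0` when `a = 0` or `b = 0`. -/
noncomputable def logMean (a b : ℝ) : ℝ :=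
  if a = 0 ∨ b = 0 then 0
  else if a = b then a
  else (a - b) / (Real.log a - Real.log b)

/-- The discrete Laplacian `Δf(x) = Σ_y (f(y)-f(x)) Q(x,y)`. -/
noncomputable def lap {X : Type*} [Fintype X] (Q : X → X → ℝ) (f : X → ℝ) (x : X) : ℝ :=
  ∑ y, (f y - f x) * Q x y

/-- The heat semigroup `P_t = e^{tΔ}`, realized via the matrix exponential of `t•(Q - I)`.
(When `Σ_y Q(x,y) = 1`, the matrix `Q - I` acts on functions exactly as `Δ` does.) -/
noncomputable def heat {X : Type*} [Fintype X] [DecidableEq X] (Q : X → X → ℝ) (t : ℝ)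
    (f : X → ℝ) : X → ℝ :=
  (NormedSpace.exp (t • (Matrix.of fun x y => Q x y - if x = y then (1 : ℝ) else 0))).mulVec f

/-- The carré du champ operator `Γ(f)(x) = Σ_y (f(y)-f(x))² Q(x,y)`. -/
noncomputable def gam {X : Type*} [Fintype X] (Q : X → X → ℝ) (f : X → ℝ) (x : X) : ℝ :=
  ∑ y, (f y - f x) ^ 2 * Q x y

/-!
Take `f = d(u, ·)`. It is `1`-Lipschitz, so `Γ f ≤ 1`, and as `P_t` is Markov also `P_t Γ f ≤ 1`;
the gradient estimate then gives `Γ (P_t f) ≤ e^{-2κt}`. By Cauchy–Schwarz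
`|Δ P_t f| ≤ √(Γ (P_t f)) ≤ e^{-κt}`, so integrating `∂_t P_t f = Δ P_t f` shows `|P_T f - f| ≤ 1/κ`
for every `T`. On the other hand `Γ (P_T f) ≤ e^{-2κT}` makes `P_T f` nearly constant across edges,
so `P_T f v - P_T f u → 0` and `d(u, v) = f v - f u ≤ 2/κ`.
-/

section MatrixExp

open Finset Matrix
open scoped Matrix.Norms.Operator

variable {ι : Type*} [Fintype ι] [DecidableEq ι]

theorem Matrix.exp_apply_nonneg {A : Matrix ι ι ℝ} (hA : ∀ i j, 0 ≤ A i j) (i j : ι) :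
    0 ≤ NormedSpace.exp A i j := by
  have hsum := Pi.hasSum.1 (Pi.hasSum.1 (NormedSpace.exp_series_hasSum_exp' (𝕂 := ℝ) A) i) j
  exact hsum.nonneg fun n => mul_nonneg (by positivity) (pow_apply_nonneg hA n i j)

theorem Matrix.exp_smul_one (c : ℝ) :
    NormedSpace.exp (c • (1 : Matrix ι ι ℝ)) = Real.exp c • (1 : Matrix ι ι ℝ) := by
  rw [← Algebra.algebraMap_eq_smul_one, ← Algebra.algebraMap_eq_smul_one, Real.exp_eq_exp_ℝ]
  exact (NormedSpace.algebraMap_exp_comm c).symm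

/-- As `A` commutes with `1`, `exp (t • (A - 1)) = e^{-t} • exp (t • A)`. -/
theorem Matrix.exp_smul_sub_one_apply_nonneg {A : Matrix ι ι ℝ} (hA : ∀ i j, 0 ≤ A i j)
    {t : ℝ} (ht : 0 ≤ t) (i j : ι) : 0 ≤ NormedSpace.exp (t • (A - 1)) i j := by
  have hcomm : Commute (t • A) ((-t) • (1 : Matrix ι ι ℝ)) :=
    ((Commute.one_right A).smul_left t).smul_right _
  rw [smul_sub, sub_eq_add_neg, ← neg_smul, Matrix.exp_add_of_commute _ _ hcomm, exp_smul_one,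
    mul_smul_one, smul_apply, smul_eq_mul]
  exact mul_nonneg (Real.exp_pos _).le (exp_apply_nonneg (fun i j => mul_nonneg ht (hA i j)) i j)

theorem Matrix.hasDerivAt_exp_smul_mulVec (A : Matrix ι ι ℝ) (v : ι → ℝ) (t : ℝ) :
    HasDerivAt (fun s : ℝ => NormedSpace.exp (s • A) *ᵥ v)
      (A *ᵥ (NormedSpace.exp (t • A) *ᵥ v)) t := by
  let L : Matrix ι ι ℝ →L[ℝ] ι → ℝ :=
    LinearMap.toContinuousLinearMap ((LinearMap.applyₗ v).comp (toLin' (R := ℝ)).toLinearMap)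
  rw [mulVec_mulVec]
  exact L.hasFDerivAt.comp_hasDerivAt t (hasDerivAt_exp_smul_const' (𝕂 := ℝ) A t)

end MatrixExp

section Generator

open Finset

variable {X : Type*} [Fintype X] {Q : X → X → ℝ}

@[simp]
theorem lap_const (Q : X → X → ℝ) (c : ℝ) : lap Q (fun _ => c) = 0 := by
  ext x
  simp [lap]

theorem sq_lap_le_gam (hQ : ∀ x y, 0 ≤ Q x y) (hrow : ∀ x, ∑ y, Q x y = 1) (f : X → ℝ)
    (x : X) : lap Q f x ^ 2 ≤ gam Q f x := by
  have := (even_two.convexOn_pow (𝕜 := ℝ)).map_sum_le (t := univ) (w := Q x)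
    (p := fun y => f y - f x) (fun y _ => hQ x y) (hrow x) (fun y _ => Set.mem_univ _)
  simpa [lap, gam, smul_eq_mul, mul_comm] using this

theorem gam_nonneg (hQ : ∀ x y, 0 ≤ Q x y) (f : X → ℝ) (x : X) : 0 ≤ gam Q f x :=
  sum_nonneg fun y _ => mul_nonneg (sq_nonneg _) (hQ x y)

theorem gam_le_sq (hQ : ∀ x y, 0 ≤ Q x y) (hrow : ∀ x, ∑ y, Q x y = 1) {f : X → ℝ} {L : ℝ}
    (hf : ∀ x y, Q x y ≠ 0 → |f y - f x| ≤ L) (x : X) : gam Q f x ≤ L ^ 2 :=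
  calc gam Q f x ≤ ∑ y, L ^ 2 * Q x y := sum_le_sum fun y _ => by
        rcases eq_or_ne (Q x y) 0 with h | h
        · simp [h]
        · obtain ⟨hlo, hhi⟩ := abs_le.1 (hf x y h)
          exact mul_le_mul_of_nonneg_right (sq_le_sq' hlo hhi) (hQ x y)
    _ = L ^ 2 := by rw [← mul_sum, hrow, mul_one]

theorem sq_sub_le_inv_mul_gam (hQ : ∀ x y, 0 ≤ Q x y) {x y : X} (hxy : 0 < Q x y) (f : X → ℝ) :
    (f y - f x) ^ 2 ≤ (Q x y)⁻¹ * gam Q f x := by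
  rw [le_inv_mul_iff₀ hxy, mul_comm]
  exact single_le_sum (f := fun z => (f z - f x) ^ 2 * Q x z)
    (fun z _ => mul_nonneg (sq_nonneg _) (hQ x z)) (mem_univ y)

end Generator

section Heat

open Finset Matrix

variable {X : Type*} [Fintype X] [DecidableEq X] {Q : X → X → ℝ}

theorem heat_eq_exp_mulVec (Q : X → X → ℝ) (t : ℝ) (f : X → ℝ) :
    heat Q t f = NormedSpace.exp (t • (of Q - 1)) *ᵥ f :=
  rfl

@[simp]
theorem heat_zero (Q : X → X → ℝ) (f : X → ℝ) : heat Q 0 f = f := by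
  simp [heat_eq_exp_mulVec]

theorem heat_sub (Q : X → X → ℝ) (t : ℝ) (f g : X → ℝ) :
    heat Q t (f - g) = heat Q t f - heat Q t g :=
  mulVec_sub _ _ _

theorem of_sub_one_mulVec (hrow : ∀ x, ∑ y, Q x y = 1) (f : X → ℝ) :
    (of Q - 1) *ᵥ f = lap Q f := by
  ext x
  rw [sub_mulVec, one_mulVec, Pi.sub_apply, lap]
  simp only [mulVec, dotProduct, of_apply, sub_mul, sum_sub_distrib, mul_comm (f _)]
  rw [← sum_mul, hrow, one_mul]

theorem lap_heat_comm (hrow : ∀ x, ∑ y, Q x y = 1) (t : ℝ) (f : X → ℝ) :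
    lap Q (heat Q t f) = heat Q t (lap Q f) := by
  have hcomm := ((Commute.refl (of Q - 1)).smul_left t).exp_left
  rw [heat_eq_exp_mulVec, heat_eq_exp_mulVec, ← of_sub_one_mulVec hrow, ← of_sub_one_mulVec hrow,
    mulVec_mulVec, mulVec_mulVec, hcomm.eq]

theorem hasDerivAt_heat (hrow : ∀ x, ∑ y, Q x y = 1) (f : X → ℝ) (t : ℝ) :
    HasDerivAt (fun s => heat Q s f) (lap Q (heat Q t f)) t := by
  simp only [heat_eq_exp_mulVec, ← of_sub_one_mulVec hrow]
  exact hasDerivAt_exp_smul_mulVec _ f t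

theorem heat_const (hrow : ∀ x, ∑ y, Q x y = 1) (t c : ℝ) :
    heat Q t (fun _ => c) = fun _ => c := by
  have hderiv (s : ℝ) : deriv (fun s => heat Q s fun _ => c) s = 0 := by
    rw [(hasDerivAt_heat hrow _ s).deriv, lap_heat_comm hrow, lap_const, heat_eq_exp_mulVec,
      mulVec_zero]
  simpa using is_const_of_deriv_eq_zero (fun s => (hasDerivAt_heat hrow _ s).differentiableAt)
    hderiv t 0

theorem heat_nonneg (hQ : ∀ x y, 0 ≤ Q x y) {t : ℝ} (ht : 0 ≤ t) {f : X → ℝ} (hf : 0 ≤ f) :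
    0 ≤ heat Q t f := fun x => by
  rw [heat_eq_exp_mulVec]
  exact sum_nonneg fun y _ => mul_nonneg (exp_smul_sub_one_apply_nonneg hQ ht x y) (hf y)

theorem heat_mono (hQ : ∀ x y, 0 ≤ Q x y) {t : ℝ} (ht : 0 ≤ t) {f g : X → ℝ} (hfg : f ≤ g) :
    heat Q t f ≤ heat Q t g :=
  sub_nonneg.1 (heat_sub Q t g f ▸ heat_nonneg hQ ht (sub_nonneg.2 hfg))

theorem gam_heat_le_exp_of_gradient_estimate (hQ : ∀ x y, 0 ≤ Q x y)
    (hrow : ∀ x, ∑ y, Q x y = 1) {κ : ℝ} {f : X → ℝ}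
    (hBE : ∀ x t, 0 ≤ t → gam Q (heat Q t f) x ≤ Real.exp (-2 * κ * t) * heat Q t (gam Q f) x)
    (hf : gam Q f ≤ fun _ => 1) (t : ℝ) (ht : 0 ≤ t) (x : X) :
    gam Q (heat Q t f) x ≤ Real.exp (-2 * κ * t) :=
  calc gam Q (heat Q t f) x ≤ Real.exp (-2 * κ * t) * heat Q t (gam Q f) x := hBE x t ht
    _ ≤ Real.exp (-2 * κ * t) * 1 := by
        gcongr
        simpa [heat_const hrow] using heat_mono hQ ht hf x
    _ = Real.exp (-2 * κ * t) := mul_one _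

theorem abs_heat_sub_le_of_gam_heat_le (hQ : ∀ x y, 0 ≤ Q x y) (hrow : ∀ x, ∑ y, Q x y = 1)
    {κ : ℝ} (hκ : 0 < κ) {f : X → ℝ}
    (hdecay : ∀ t, 0 ≤ t → ∀ x, gam Q (heat Q t f) x ≤ Real.exp (-2 * κ * t))
    {T : ℝ} (hT : 0 ≤ T) (x : X) : |heat Q T f x - f x| ≤ 1 / κ := by
  have hlap (t : ℝ) (ht : 0 ≤ t) : ‖lap Q (heat Q t f) x‖ ≤ Real.exp (-κ * t) := by
    refine abs_le_of_sq_le_sq ?_ (Real.exp_pos _).le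
    calc _ ≤ gam Q (heat Q t f) x := sq_lap_le_gam hQ hrow _ x
      _ ≤ Real.exp (-2 * κ * t) := hdecay t ht x
      _ = Real.exp (-κ * t) ^ 2 := by rw [← Real.exp_nat_mul]; ring_nf
  have hderiv (t : ℝ) : HasDerivAt (fun s => heat Q s f x - f x) (lap Q (heat Q t f) x) t :=
    (hasDerivAt_pi.1 (hasDerivAt_heat hrow f t) x).sub_const (f x)
  have hbound (t : ℝ) :
      HasDerivAt (fun s => (1 - Real.exp (-κ * s)) / κ) (Real.exp (-κ * t)) t := by
    have := (((hasDerivAt_id t).const_mul (-κ)).exp.const_sub 1).div_const κ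
    exact this.congr_deriv (by field_simp; simp)
  have := image_norm_le_of_norm_deriv_right_le_deriv_boundary (a := 0) (b := T)
    (fun t _ => (hderiv t).continuousAt.continuousWithinAt) (fun t _ => (hderiv t).hasDerivWithinAt)
    (by simp) hbound (fun t ht => hlap t ht.1) (Set.right_mem_Icc.2 hT)
  calc |heat Q T f x - f x| ≤ (1 - Real.exp (-κ * T)) / κ := this
    _ ≤ 1 / κ := by gcongr; linarith [Real.exp_pos (-κ * T)]

end Heat

theorem le_of_forall_le_add_mul_exp_neg {a b C κ : ℝ} (hκ : 0 < κ)
    (h : ∀ T, 0 ≤ T → a ≤ b + C * Real.exp (-κ * T)) : a ≤ b := by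
  have hlim : Filter.Tendsto (fun T => b + C * Real.exp (-κ * T)) Filter.atTop (nhds b) := by
    simpa using ((Real.tendsto_exp_atBot.comp
      (Filter.tendsto_id.const_mul_atTop_of_neg (neg_neg_of_pos hκ))).const_mul C).const_add b
  exact ge_of_tendsto hlim (Filter.eventually_atTop.2 ⟨0, h⟩)

namespace SimpleGraph

open Finset

variable {V : Type*} {G : SimpleGraph V}

theorem Walk.abs_sub_le_length_mul {u v : V} (p : G.Walk u v) {g : V → ℝ} {C : ℝ}
    (hg : ∀ a b, G.Adj a b → |g b - g a| ≤ C) : |g v - g u| ≤ p.length * C := by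
  induction p with
  | nil => simp
  | @cons a w v h q ih =>
    calc |g v - g a| ≤ |g v - g w| + |g w - g a| := abs_sub_le _ _ _
      _ ≤ q.length * C + C := add_le_add ih (hg a w h)
      _ = (q.cons h).length * C := by rw [length_cons]; push_cast; ring

theorem abs_dist_sub_dist_le_one (u : V) {x y : V} (h : G.Adj x y) :
    |(G.dist u y : ℝ) - G.dist u x| ≤ 1 := by
  have : G.dist u y ≤ G.dist u x + 1 ∧ G.dist u x ≤ G.dist u y + 1 := by
    rcases h.diff_dist_adj (u := u) with h | h | h <;> omega
  rw [abs_sub_le_iff]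
  constructor <;> linarith [(by exact_mod_cast this.1 : (G.dist u y : ℝ) ≤ G.dist u x + 1),
    (by exact_mod_cast this.2 : (G.dist u x : ℝ) ≤ G.dist u y + 1)]

variable [Fintype V] [DecidableRel G.Adj]

variable (G) in
noncomputable def randomWalkKernel (x y : V) : ℝ :=
  if G.Adj x y then (G.degree x : ℝ)⁻¹ else 0

theorem randomWalkKernel_nonneg (x y : V) : 0 ≤ G.randomWalkKernel x y := by
  unfold randomWalkKernel
  split_ifs <;> positivity

theorem randomWalkKernel_of_adj {x y : V} (h : G.Adj x y) :
    G.randomWalkKernel x y = (G.degree x : ℝ)⁻¹ :=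
  if_pos h

theorem adj_of_randomWalkKernel_ne_zero {x y : V} (h : G.randomWalkKernel x y ≠ 0) : G.Adj x y :=
  of_not_not fun hxy => h (if_neg hxy)

theorem sum_randomWalkKernel {x : V} (hx : 0 < G.degree x) : ∑ y, G.randomWalkKernel x y = 1 := by
  simp [randomWalkKernel, Finset.sum_ite, ← neighborFinset_eq_filter, hx.ne']

theorem sq_sub_le_card_mul_gam {a b : V} (hab : G.Adj a b) (g : V → ℝ) :
    (g b - g a) ^ 2 ≤ Fintype.card V * gam G.randomWalkKernel g a := by
  have hpos : 0 < G.randomWalkKernel a b := by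
    rw [randomWalkKernel_of_adj hab, inv_pos, Nat.cast_pos, degree_pos_iff_exists_adj]
    exact ⟨b, hab⟩
  calc (g b - g a) ^ 2 ≤ (G.randomWalkKernel a b)⁻¹ * gam G.randomWalkKernel g a :=
        sq_sub_le_inv_mul_gam randomWalkKernel_nonneg hpos g
    _ = G.degree a * gam G.randomWalkKernel g a := by rw [randomWalkKernel_of_adj hab, inv_inv]
    _ ≤ Fintype.card V * gam G.randomWalkKernel g a := by
        gcongr
        · exact gam_nonneg randomWalkKernel_nonneg g a
        · exact (G.degree_lt_card_verts a).le

theorem abs_sub_le_of_gam_heat_le [DecidableEq V] (hdeg : ∀ x, 0 < G.degree x) {κ : ℝ}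
    (hκ : 0 < κ) {f : V → ℝ}
    (hdecay : ∀ t, 0 ≤ t → ∀ x,
      gam G.randomWalkKernel (heat G.randomWalkKernel t f) x ≤ Real.exp (-2 * κ * t))
    {u v : V} (huv : G.Reachable u v) : |f v - f u| ≤ 2 / κ := by
  obtain ⟨p⟩ := huv
  have hrow x := sum_randomWalkKernel (hdeg x)
  refine le_of_forall_le_add_mul_exp_neg hκ (C := p.length * √(Fintype.card V)) fun T hT => ?_
  have hu := abs_heat_sub_le_of_gam_heat_le randomWalkKernel_nonneg hrow hκ hdecay hT u
  have hv := abs_heat_sub_le_of_gam_heat_le randomWalkKernel_nonneg hrow hκ hdecay hT v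
  set g := heat G.randomWalkKernel T f
  have hedge a b (hab : G.Adj a b) : |g b - g a| ≤ √(Fintype.card V) * Real.exp (-κ * T) := by
    refine abs_le_of_sq_le_sq ?_ (by positivity)
    calc (g b - g a) ^ 2 ≤ Fintype.card V * gam G.randomWalkKernel g a :=
          sq_sub_le_card_mul_gam hab g
      _ ≤ Fintype.card V * Real.exp (-2 * κ * T) := by gcongr; exact hdecay T hT a
      _ = (√(Fintype.card V) * Real.exp (-κ * T)) ^ 2 := by
          rw [mul_pow, Real.sq_sqrt (Nat.cast_nonneg _), ← Real.exp_nat_mul]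
          ring_nf
  have hp := p.abs_sub_le_length_mul hedge
  rw [abs_le] at hu hv hp ⊢
  constructor <;> linarith [mul_assoc (p.length : ℝ) √(Fintype.card V) (Real.exp (-κ * T)),
    (by ring : 2 / κ = 1 / κ + 1 / κ)]

end SimpleGraph

theorem diameter_bound_bakry_emery_general
    {X : Type*} [Fintype X] [DecidableEq X]
    (G : SimpleGraph X) [DecidableRel G.Adj] (hconn : G.Connected)
    (Q : X → X → ℝ) (κ : ℝ) (hκ : 0 < κ)
    (hQ : ∀ x y, Q x y = if G.Adj x y then ((G.degree x : ℝ))⁻¹ else 0)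
    (hBE : ∀ f : X → ℝ, ∀ x : X, ∀ t : ℝ, 0 ≤ t →
      gam Q (heat Q t f) x ≤ Real.exp (-2 * κ * t) * heat Q t (gam Q f) x) :
    (G.diam : ℝ) ≤ 2 / κ := by
  have : Nonempty X := hconn.nonempty
  obtain ⟨u, v, huv⟩ := G.exists_dist_eq_diam
  rcases eq_or_ne G.diam 0 with h0 | h0
  · rw [h0, Nat.cast_zero]
    positivity
  have : Nontrivial X := G.nontrivial_of_diam_ne_zero h0
  have hdeg x : 0 < G.degree x := hconn.preconnected.degree_pos_of_nontrivial x
  obtain rfl : Q = G.randomWalkKernel := funext₂ hQ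
  have hQ0 : ∀ x y, 0 ≤ G.randomWalkKernel x y := SimpleGraph.randomWalkKernel_nonneg
  have hrow x : ∑ y, G.randomWalkKernel x y = 1 := SimpleGraph.sum_randomWalkKernel (hdeg x)
  set f : X → ℝ := fun z => G.dist u z
  have hgam : gam G.randomWalkKernel f ≤ fun _ => 1 := fun x => by
    simpa using gam_le_sq hQ0 hrow (fun x y h => SimpleGraph.abs_dist_sub_dist_le_one u
      (SimpleGraph.adj_of_randomWalkKernel_ne_zero h)) x
  have hdecay := gam_heat_le_exp_of_gradient_estimate hQ0 hrow (fun x t ht => hBE f x t ht) hgam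
  calc (G.diam : ℝ) = f v - f u := by simp [f, huv]
    _ ≤ |f v - f u| := le_abs_self _
    _ ≤ 2 / κ := SimpleGraph.abs_sub_le_of_gam_heat_le hdeg hκ hdecay (hconn u v)

/-- **Sharp diameter bound from the Bakry–Émery gradient estimate**: if the simple random
walk on a finite connected graph satisfies `Γ(P_t f)(x) ≤ e^{-2κt}·P_tΓ(f)(x)` with
`κ > 0`, then `diam(X) ≤ 2/κ`. -/
theorem diameter_bound_bakry_emery
    {X : Type*} [Fintype X] [DecidableEq X]
    (G : SimpleGraph X) [DecidableRel G.Adj] (hconn : G.Connected)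
    (Q : X → X → ℝ) (π : X → ℝ) (κ : ℝ) (hκ : 0 < κ)
    (hQ : ∀ x y, Q x y = if G.Adj x y then ((G.degree x : ℝ))⁻¹ else 0)
    (hπ : ∀ x, π x = (G.degree x : ℝ) / ∑ v, (G.degree v : ℝ))
    (hBE : ∀ f : X → ℝ, ∀ x : X, ∀ t : ℝ, 0 ≤ t →
      gam Q (heat Q t f) x ≤ Real.exp (-2 * κ * t) * heat Q t (gam Q f) x) :
    (G.diam : ℝ) ≤ 2 / κ :=
  diameter_bound_bakry_emery_general G hconn Q κ hκ hQ hBE
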